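/- arXiv:1212.3392 — 5 statements merged into one kernel-verified Lean document; each statement's English description precedes it below -/
import Mathlib

section
/- Let A be an associative unital algebra, q a scalar with q² ≠ 1, and Z = [[e,f],[0,1]] with e invertible, f ≠ 0, and q·e·f = f·e. Write Z̃ = [[ẽ, f̃],[0,1]] = [[e⁻¹, −e⁻¹f],[0,1]]. Then q·ẽ·f̃ ≠ f̃·ẽ, provided f·e⁻² ≠ 0; that is, the inverse matrix Z̃ does not lie in H_q(A). -/
/-!
Put `a = e⁻¹`. Conjugating `q e f = f e` by `a` gives `a f = q f a`, hence
`q ẽ f̃ = -q³ f a²` and `f̃ ẽ = -q f a²`. Equality would give `q³ = q` since `f a² ≠ 0`,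
and `q ≠ 0` because `q = 0` forces `f e = 0`, i.e. `f = 0`; so `q² = 1`.
-/

namespace Units

variable {R A : Type*} [CommSemiring R] [Semiring A] [Algebra R A] {q : R} {e : Aˣ} {f : A}

theorem inv_mul_eq_smul_mul_inv_of_smul_mul_eq (h : q • ((e : A) * f) = f * e) :
    (↑e⁻¹ : A) * f = q • (f * ↑e⁻¹) :=
  calc (↑e⁻¹ : A) * f = ↑e⁻¹ * (f * e) * ↑e⁻¹ := by simp [mul_assoc]
    _ = q • (f * ↑e⁻¹) := by rw [← h, mul_smul_comm, smul_mul_assoc]; simp [← mul_assoc]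

theorem inv_mul_inv_mul_eq_smul_of_smul_mul_eq (h : q • ((e : A) * f) = f * e) :
    (↑e⁻¹ : A) * (↑e⁻¹ * f) = q ^ 2 • (f * ↑(e⁻¹ * e⁻¹)) := by
  rw [inv_mul_eq_smul_mul_inv_of_smul_mul_eq h, mul_smul_comm, ← mul_assoc,
    inv_mul_eq_smul_mul_inv_of_smul_mul_eq h, smul_mul_assoc, smul_smul, sq, mul_assoc,
    Units.val_mul]

theorem inv_mul_mul_inv_eq_smul_of_smul_mul_eq (h : q • ((e : A) * f) = f * e) :
    (↑e⁻¹ : A) * f * ↑e⁻¹ = q • (f * ↑(e⁻¹ * e⁻¹)) := by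
  rw [inv_mul_eq_smul_mul_inv_of_smul_mul_eq h, smul_mul_assoc, mul_assoc, Units.val_mul]

end Units

open Units in
theorem inverse_not_in_Hq_general (A : Type*) [Ring A] [Algebra ℂ A]
    (q : ℂ) (hq2 : q ^ 2 ≠ 1) (e : Aˣ) (f : A)
    (h : q • ((e : A) * f) = f * (e : A))
    (hfe : f * (((e⁻¹ * e⁻¹ : Aˣ) : A)) ≠ 0) :
    q • (((e⁻¹ : Aˣ) : A) * (-(((e⁻¹ : Aˣ) : A) * f)))
      ≠ (-(((e⁻¹ : Aˣ) : A) * f)) * ((e⁻¹ : Aˣ) : A) := by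
  have hq : q ≠ 0 := by
    rintro rfl
    have hf : f = 0 := by simpa [eq_comm] using h
    simp [hf] at hfe
  intro hcontra
  rw [mul_neg, smul_neg, neg_mul, neg_inj, inv_mul_inv_mul_eq_smul_of_smul_mul_eq h,
    inv_mul_mul_inv_eq_smul_of_smul_mul_eq h, smul_smul] at hcontra
  have hcube : q * q ^ 2 = q := smul_left_injective ℂ hfe hcontra
  exact hq2 ((mul_eq_left₀ hq).mp hcube)

/-- If `q² ≠ 1`, `f·e⁻² ≠ 0` and `q·e·f = f·e`, then the inverse matrix
`Z̃ = [[e⁻¹, -e⁻¹f],[0,1]]` does not lie in `H_q(A)`: its entries `ẽ = e⁻¹`,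
`f̃ = -e⁻¹f` fail the relation `q·ẽ·f̃ = f̃·ẽ`. -/
theorem inverse_not_in_Hq (A : Type*) [Ring A] [Algebra ℂ A]
    (q : ℂ) (hq2 : q ^ 2 ≠ 1) (e : Aˣ) (f : A) (hf : f ≠ 0)
    (h : q • ((e : A) * f) = f * (e : A))
    (hfe : f * (((e⁻¹ * e⁻¹ : Aˣ) : A)) ≠ 0) :
    q • (((e⁻¹ : Aˣ) : A) * (-(((e⁻¹ : Aˣ) : A) * f)))
      ≠ (-(((e⁻¹ : Aˣ) : A) * f)) * ((e⁻¹ : Aˣ) : A) :=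
  inverse_not_in_Hq_general A q hq2 e f h hfe
end

section
/- In the twisted power series ring (S,σ)[[X]] with q central invertible, the operators Θ^(l) defined by Θ^(l)(Σ_i X^i a_i) = Σ_i X^i binom(i+l, l)_q a_{i+l} satisfy the composition rule Θ^(i) ∘ Θ^(j) = binom(i+j, i)_q · Θ^(i+j) for all i, j ∈ ℕ. -/
/-!
Both sides of the composition rule act on the coefficient `a_{n+i+j}` by a scalar, so the
rule is the q-trinomial revision
`binom(n+i, i)_q · binom(n+i+j, j)_q = binom(i+j, i)_q · binom(n+i+j, i+j)_q`.
We prove it for the generic q-binomials in `ℤ[X]` and specialise `X ↦ q`: in the domain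
`ℤ[X]` both sides times `[n]! [i]! [j]!` equal `[n+i+j]!`, where `[m]! = ∏_{k=1}^m (X^k - 1)`,
and these products are nonzero in `ℤ[X]`, whereas their values at a root of unity `q`
vanish, so the cancellation cannot be done in `C` itself.
-/

/-- The Gaussian (q-)binomial coefficient, defined via the q-Pascal rule
`binom(m+1, n+1)_q = binom(m, n)_q + q^(n+1)·binom(m, n+1)_q`. -/
def qBinomRec {C : Type*} [Field C] (q : C) : ℕ → ℕ → C
  | _, 0 => 1
  | 0, _ + 1 => 0
  | m + 1, n + 1 => qBinomRec q m n + q ^ (n + 1) * qBinomRec q m (n + 1)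

/-- The operator `Θ^(l)` on the twisted power series ring `(S,σ)[[X]]`,
acting on coefficient sequences by
`Θ^(l)(Σ_i X^i a_i) = Σ_i X^i binom(i+l,l)_q a_{i+l}`. -/
def thetaHat {C : Type*} [Field C] {S : Type*} [Ring S] [Algebra C S]
    (q : C) (l : ℕ) (f : ℕ → S) : ℕ → S :=
  fun n => qBinomRec q (n + l) l • f (n + l)

open Polynomial

noncomputable def qBinomPoly : ℕ → ℕ → ℤ[X]
  | _, 0 => 1
  | 0, _ + 1 => 0
  | m + 1, n + 1 => qBinomPoly m n + X ^ (n + 1) * qBinomPoly m (n + 1)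

noncomputable def qFac (m : ℕ) : ℤ[X] := ∏ k ∈ Finset.range m, (X ^ (k + 1) - 1)

lemma qFac_zero : qFac 0 = 1 := rfl

lemma qFac_succ (m : ℕ) : qFac (m + 1) = qFac m * (X ^ (m + 1) - 1) :=
  Finset.prod_range_succ _ _

lemma qFac_ne_zero (m : ℕ) : qFac m ≠ 0 :=
  Finset.prod_ne_zero_iff.mpr fun k _ => by
    simpa using X_pow_sub_C_ne_zero (R := ℤ) k.succ_pos 1

lemma qBinomPoly_of_lt : ∀ {m n : ℕ}, m < n → qBinomPoly m n = 0
  | 0, _ + 1, _ => rfl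
  | m + 1, n + 1, h => by
    rw [qBinomPoly, qBinomPoly_of_lt (by omega : m < n), qBinomPoly_of_lt (by omega : m < n + 1)]
    ring

lemma qBinomPoly_self_succ (n : ℕ) : qBinomPoly (n + 1) (n + 1) = qBinomPoly n n := by
  rw [qBinomPoly, qBinomPoly_of_lt n.lt_succ_self, mul_zero, add_zero]

lemma qBinomPoly_mul_qFac_mul_qFac : ∀ n k : ℕ,
    qBinomPoly (n + k) n * (qFac n * qFac k) = qFac (n + k)
  | 0, k => by simp [qBinomPoly, qFac_zero]
  | n + 1, 0 => by
    have ih := qBinomPoly_mul_qFac_mul_qFac n 0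
    simp only [add_zero, qFac_zero, mul_one] at ih ⊢
    rw [qBinomPoly_self_succ, qFac_succ]
    linear_combination (X ^ (n + 1) - 1) * ih
  | n + 1, k + 1 => by
    have ih₁ := qBinomPoly_mul_qFac_mul_qFac n (k + 1)
    have ih₂ := qBinomPoly_mul_qFac_mul_qFac (n + 1) k
    rw [show n + 1 + (k + 1) = n + 1 + k + 1 by omega, qBinomPoly, qFac_succ (n + 1 + k),
      qFac_succ n, qFac_succ k]
    rw [show n + (k + 1) = n + 1 + k by omega, qFac_succ k] at ih₁
    rw [qFac_succ n] at ih₂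
    linear_combination (X ^ (n + 1) - 1) * ih₁ + X ^ (n + 1) * (X ^ (k + 1) - 1) * ih₂

lemma qBinomPoly_trinomial_revision (n i j : ℕ) :
    qBinomPoly (n + i) i * qBinomPoly (n + i + j) j =
      qBinomPoly (i + j) i * qBinomPoly (n + i + j) (i + j) := by
  have e₁ := qBinomPoly_mul_qFac_mul_qFac i n
  have e₂ := qBinomPoly_mul_qFac_mul_qFac j (n + i)
  have e₃ := qBinomPoly_mul_qFac_mul_qFac i j
  have e₄ := qBinomPoly_mul_qFac_mul_qFac (i + j) n
  rw [add_comm i n] at e₁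
  rw [add_comm j (n + i)] at e₂
  rw [add_comm (i + j) n, ← add_assoc] at e₄
  apply mul_right_cancel₀ (mul_ne_zero (mul_ne_zero (qFac_ne_zero n) (qFac_ne_zero i))
    (qFac_ne_zero j))
  linear_combination (qBinomPoly (n + i + j) j * qFac j) * e₁ + e₂
    - (qBinomPoly (n + i + j) (i + j) * qFac n) * e₃ - e₄

lemma aeval_qBinomPoly {C : Type*} [Field C] (q : C) :
    ∀ m n : ℕ, aeval q (qBinomPoly m n) = qBinomRec q m n
  | _, 0 => by simp [qBinomPoly, qBinomRec]
  | 0, _ + 1 => by simp [qBinomPoly, qBinomRec]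
  | m + 1, n + 1 => by
    simp [qBinomPoly, qBinomRec, aeval_qBinomPoly q m n, aeval_qBinomPoly q m (n + 1)]

lemma qBinomRec_trinomial_revision {C : Type*} [Field C] (q : C) (n i j : ℕ) :
    qBinomRec q (n + i) i * qBinomRec q (n + i + j) j =
      qBinomRec q (i + j) i * qBinomRec q (n + i + j) (i + j) := by
  simpa only [map_mul, aeval_qBinomPoly] using
    congrArg (aeval q) (qBinomPoly_trinomial_revision n i j)

theorem thetaHat_comp_general (C : Type*) [Field C] (S : Type*) [Ring S] [Algebra C S]
    (q : C) (i j : ℕ) (f : ℕ → S) :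
    thetaHat q i (thetaHat q j f) = qBinomRec q (i + j) i • thetaHat q (i + j) f := by
  funext n
  simp only [thetaHat, Pi.smul_apply, smul_smul, ← add_assoc]
  rw [qBinomRec_trinomial_revision q n i j]

/-- The operators `Θ^(l)` on the twisted power series ring satisfy the
composition rule `Θ^(i) ∘ Θ^(j) = binom(i+j,i)_q · Θ^(i+j)`. -/
theorem thetaHat_comp (C : Type*) [Field C] (S : Type*) [Ring S] [Algebra C S]
    (σ : S →+* S) (q : C) (hq : q ≠ 0) (i j : ℕ) (f : ℕ → S) :
    thetaHat q i (thetaHat q j f) = qBinomRec q (i + j) i • thetaHat q (i + j) f :=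
  thetaHat_comp_general C S q i j f
end

section
/- Let A be an associative unital ℂ-algebra and q ∈ ℂ with q ≠ 1 and q not a root of unity. Fix t in the center of A. Define Ĝ(A) as the set of pairs (e, f) with e, f ∈ A, ef = q⁻¹fe, e − 1 and f nilpotent. Then for (e₁,f₁), (e₂,f₂) ∈ Ĝ(A) with {e₁,f₁} and {e₂,f₂} mutually commutative, the pair (e₁e₂, e₁f₂ + f₁) again satisfies (e₁e₂)(e₁f₂+f₁) = q⁻¹(e₁f₂+f₁)(e₁e₂), and e₁e₂ − 1 and e₁f₂ + f₁ are nilpotent. -/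
/-!
The relation `u * v = c • (v * u)` is stable under multiplying `u` by elements commuting
with `v`, multiplying `v` by elements commuting with `u`, and adding in `v`. This gives the
relation for `(e₁e₂, e₁f₂ + f₁)`, and also `(e₁f₂) f₁ = q⁻¹ • f₁ (e₁f₂)`. If
`y * x = c • (x * y)`, every power `(x + y)ⁿ` is a linear combination of monomials `xᵃ yᵇ`
with `a + b = n`; for nilpotent `x, y` these all vanish once `n` is large, so `x + y` is
nilpotent. Finally `e₁e₂ - 1 = e₁(e₂ - 1) + (e₁ - 1)` is a sum of commuting nilpotents.
-/

def QCommute {R A : Type*} [CommSemiring R] [Semiring A] [Algebra R A] (c : R) (u v : A) : Prop :=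
  u * v = c • (v * u)

namespace QCommute

variable {R A : Type*} [CommSemiring R] [Semiring A] [Algebra R A] {c : R} {u u' v w : A}

theorem mul_left (h : QCommute c u v) (h' : Commute u' v) : QCommute c (u' * u) v := by
  unfold QCommute at *
  rw [mul_assoc, h, mul_smul_comm, ← mul_assoc, h'.eq, mul_assoc]

theorem mul_right (h : QCommute c u v) (h' : Commute u' v) : QCommute c (u * u') v := by
  unfold QCommute at *
  rw [mul_assoc, h'.eq, ← mul_assoc, h, smul_mul_assoc, mul_assoc]

theorem commute_mul_right (h : QCommute c u v) (h' : Commute u w) : QCommute c u (w * v) := by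
  unfold QCommute at *
  rw [← mul_assoc, h'.eq, mul_assoc, h, mul_smul_comm, mul_assoc]

theorem add_right (hv : QCommute c u v) (hw : QCommute c u w) : QCommute c u (v + w) := by
  unfold QCommute at *
  rw [mul_add, hv, hw, add_mul, smul_add]

theorem pow_left (h : QCommute c u v) (n : ℕ) : QCommute (c ^ n) (u ^ n) v := by
  induction n with
  | zero => simp [QCommute]
  | succ n ih =>
    unfold QCommute at *
    rw [pow_succ, mul_assoc, h, mul_smul_comm, ← mul_assoc, ih, smul_mul_assoc, smul_smul,
      mul_assoc, ← pow_succ, ← pow_succ']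

theorem add_pow_mem_span (h : QCommute c v u) (n : ℕ) :
    (u + v) ^ n ∈ Submodule.span R {z | ∃ a b, a + b = n ∧ u ^ a * v ^ b = z} := by
  induction n with
  | zero => exact Submodule.subset_span ⟨0, 0, rfl, by simp⟩
  | succ n ih =>
    rw [pow_succ]
    suffices (Submodule.span R {z | ∃ a b, a + b = n ∧ u ^ a * v ^ b = z}).map
        (LinearMap.mulRight R (u + v)) ≤
          Submodule.span R {z | ∃ a b, a + b = n + 1 ∧ u ^ a * v ^ b = z} from
      this ⟨_, ih, rfl⟩
    rw [Submodule.map_span_le]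
    rintro _ ⟨a, b, rfl, rfl⟩
    have hmul :
        u ^ a * v ^ b * (u + v) = c ^ b • (u ^ (a + 1) * v ^ b) + u ^ a * v ^ (b + 1) := by
      rw [mul_add, mul_assoc, h.pow_left b, mul_smul_comm, ← mul_assoc, ← pow_succ,
        mul_assoc, ← pow_succ]
    rw [LinearMap.mulRight_apply, hmul]
    exact Submodule.add_mem _
      (Submodule.smul_mem _ _ (Submodule.subset_span ⟨a + 1, b, by omega, rfl⟩))
      (Submodule.subset_span ⟨a, b + 1, by omega, rfl⟩)

theorem isNilpotent_add (h : QCommute c v u) (hu : IsNilpotent u) (hv : IsNilpotent v) :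
    IsNilpotent (u + v) := by
  obtain ⟨m, hm⟩ := hu
  obtain ⟨k, hk⟩ := hv
  refine ⟨m + k, ?_⟩
  have hmonomial : ∀ a b, a + b = m + k → u ^ a * v ^ b = 0 := by
    intro a b hab
    rcases le_or_gt m a with hma | ham
    · rw [← Nat.sub_add_cancel hma, pow_add, hm, mul_zero, zero_mul]
    · rw [← Nat.sub_add_cancel (show k ≤ b by omega), pow_add, hk, mul_zero, mul_zero]
  have hspan : Submodule.span R {z | ∃ a b, a + b = m + k ∧ u ^ a * v ^ b = z} = ⊥ := by
    rw [Submodule.span_eq_bot]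
    rintro _ ⟨a, b, hab, rfl⟩
    exact hmonomial a b hab
  simpa [hspan] using h.add_pow_mem_span (m + k)

end QCommute

theorem Commute.isNilpotent_mul_sub_one {A : Type*} [Ring A] {a b : A} (h : Commute a b)
    (ha : IsNilpotent (a - 1)) (hb : IsNilpotent (b - 1)) : IsNilpotent (a * b - 1) := by
  have hsum : a * b - 1 = a * (b - 1) + (a - 1) := by noncomm_ring
  have hab : Commute a (b - 1) := h.sub_right (Commute.one_right a)
  have haa : Commute a (a - 1) := (Commute.refl a).sub_right (Commute.one_right a)
  have hba : Commute (b - 1) (a - 1) := hab.symm.sub_right (Commute.one_right _)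
  rw [hsum]
  exact (haa.mul_left hba).isNilpotent_add (hab.isNilpotent_mul_left hb) ha

theorem Ghat_closed_under_product_general (A : Type*) [Ring A] [Algebra ℂ A]
    (q : ℂ)
    (e₁ f₁ e₂ f₂ : A)
    (h1 : e₁ * f₁ = q⁻¹ • (f₁ * e₁)) (h2 : e₂ * f₂ = q⁻¹ • (f₂ * e₂))
    (n1 : IsNilpotent (e₁ - 1)) (n2 : IsNilpotent f₁)
    (n3 : IsNilpotent (e₂ - 1)) (n4 : IsNilpotent f₂)
    (c1 : Commute e₁ e₂) (c2 : Commute e₁ f₂)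
    (c3 : Commute f₁ e₂) (c4 : Commute f₁ f₂) :
    (e₁ * e₂) * (e₁ * f₂ + f₁) = q⁻¹ • ((e₁ * f₂ + f₁) * (e₁ * e₂)) ∧
    IsNilpotent (e₁ * e₂ - 1) ∧ IsNilpotent (e₁ * f₂ + f₁) := by
  have q1 : QCommute q⁻¹ e₁ f₁ := h1
  have q2 : QCommute q⁻¹ e₂ f₂ := h2
  have hf₂ : QCommute q⁻¹ (e₁ * e₂) (e₁ * f₂) :=
    (q2.commute_mul_right c1.symm).mul_left ((Commute.refl e₁).mul_right c2)
  have hf₁ : QCommute q⁻¹ (e₁ * e₂) f₁ := q1.mul_right c3.symm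
  refine ⟨hf₂.add_right hf₁, c1.isNilpotent_mul_sub_one n1 n3, ?_⟩
  rw [add_comm]
  exact (q1.mul_right c4.symm).isNilpotent_add n2 (c2.isNilpotent_mul_left n4)

/-- Closure of `Ĝ(A) = {(e,f) : ef = q⁻¹fe, e-1 and f nilpotent}` under the
product `(e₁,f₁)·(e₂,f₂) = (e₁e₂, e₁f₂+f₁)`, for mutually commutative pairs. -/
theorem Ghat_closed_under_product (A : Type*) [Ring A] [Algebra ℂ A]
    (q : ℂ) (hq1 : q ≠ 1) (hq : ∀ n : ℕ, 1 ≤ n → q ^ n ≠ 1)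
    (t : A) (ht : ∀ a : A, t * a = a * t)
    (e₁ f₁ e₂ f₂ : A)
    (h1 : e₁ * f₁ = q⁻¹ • (f₁ * e₁)) (h2 : e₂ * f₂ = q⁻¹ • (f₂ * e₂))
    (n1 : IsNilpotent (e₁ - 1)) (n2 : IsNilpotent f₁)
    (n3 : IsNilpotent (e₂ - 1)) (n4 : IsNilpotent f₂)
    (c1 : Commute e₁ e₂) (c2 : Commute e₁ f₂)
    (c3 : Commute f₁ e₂) (c4 : Commute f₁ f₂) :
    (e₁ * e₂) * (e₁ * f₂ + f₁) = q⁻¹ • ((e₁ * f₂ + f₁) * (e₁ * e₂)) ∧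
    IsNilpotent (e₁ * e₂ - 1) ∧ IsNilpotent (e₁ * f₂ + f₁) :=
  Ghat_closed_under_product_general A q e₁ f₁ e₂ f₂ h1 h2 n1 n2 n3 n4 c1 c2 c3 c4
end

section
/- Let A be a commutative ring and define Ĝ_II(A) = {(e, b(W)) ∈ A × A[[W]] : e − 1 and all coefficients of b(W) − 1 are nilpotent}, with multiplication (e₁, b₁(W)) ⋆ (e₂, b₂(W)) = (e₁e₂, b₁(e₂W + (e₂−1)t)·b₂(W)) for a fixed t ∈ A. Then Ĝ_II(A) is a group: the operation is associative, (1,1) is the unit, and (e, b(W))⁻¹ = (e⁻¹, b(e⁻¹W + (e⁻¹−1)t)⁻¹). -/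
/-!
The product substitutes `b₁(e₂W + (e₂ - 1)t) = b₁(e₂(W + t) - t)`. Since `(e₂ - 1)t` is
nilpotent this is `PowerSeries.subst`, hence a ring endomorphism of `A⟦W⟧`, and substituting
for `e₁` and then for `e₂` is substituting for `e₁e₂`; associativity and the inverse formula
follow. Closure and invertibility hold because modulo the nilradical `e ≡ 1`, `b ≡ 1`, and the
substitution becomes the identity.
-/

/-- Substitution of the linear polynomial `uW + c` (with `c` nilpotent) into a
power series `b(W)`: the coefficient of `Wⁿ` is `Σₖ bₖ · coeff_n((uW+c)ᵏ)`,
a finite sum since `c` is nilpotent. -/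
noncomputable def substLin {A : Type*} [CommRing A] (u c : A)
    (b : PowerSeries A) : PowerSeries A :=
  PowerSeries.mk fun n => ∑ᶠ k : ℕ, PowerSeries.coeff k b *
    ((Polynomial.C u * Polynomial.X + Polynomial.C c) ^ k).coeff n

/-- `Ĝ_II(A)`: pairs `(e, b(W))` with `e - 1` and all coefficients of
`b(W) - 1` nilpotent. -/
def GII (A : Type*) [CommRing A] : Set (A × PowerSeries A) :=
  {p | IsNilpotent (p.1 - 1) ∧ ∀ n : ℕ, IsNilpotent (PowerSeries.coeff n (p.2 - 1))}

/-- The product `(e₁,b₁(W)) ⋆ (e₂,b₂(W)) = (e₁e₂, b₁(e₂W + (e₂-1)t)·b₂(W))`. -/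
noncomputable def mulII {A : Type*} [CommRing A] (t : A)
    (x y : A × PowerSeries A) : A × PowerSeries A :=
  (x.1 * y.1, substLin y.1 ((y.1 - 1) * t) x.2 * y.2)

/-- The inverse `(e, b(W))⁻¹ = (e⁻¹, b(e⁻¹W + (e⁻¹-1)t)⁻¹)`. -/
noncomputable def invII {A : Type*} [CommRing A] (t : A)
    (x : A × PowerSeries A) : A × PowerSeries A :=
  (Ring.inverse x.1,
    Ring.inverse (substLin (Ring.inverse x.1) ((Ring.inverse x.1 - 1) * t) x.2))

open PowerSeries

lemma map_ringInverse_eq_one {M N F : Type*} [MonoidWithZero M] [MonoidWithZero N]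
    [FunLike F M N] [MonoidHomClass F M N] (f : F) {a : M} (ha : IsUnit a) (h : f a = 1) :
    f (Ring.inverse a) = 1 := by
  simpa [h] using congrArg f (Ring.inverse_mul_cancel a ha)

section SubstLin

variable {A : Type*} [CommRing A]

lemma hasSubst_C_mul_X_add_C {c : A} (hc : IsNilpotent c) (u : A) :
    HasSubst (C u * X + C c : A⟦X⟧) := by
  change IsNilpotent (constantCoeff (C u * X + C c))
  simpa using hc

lemma substLin_eq_subst {c : A} (hc : IsNilpotent c) (u : A) (b : A⟦X⟧) :
    substLin u c b = b.subst (C u * X + C c : A⟦X⟧) := by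
  ext n
  rw [coeff_subst' (hasSubst_C_mul_X_add_C hc u)]
  simp [substLin, ← Polynomial.coeff_coe]

lemma substLin_one_zero (b : A⟦X⟧) : substLin 1 0 b = b := by
  simp [substLin_eq_subst (c := (0 : A)) IsNilpotent.zero]

lemma substLin_one {c : A} (hc : IsNilpotent c) (u : A) : substLin u c 1 = 1 := by
  rw [substLin_eq_subst hc, ← coe_substAlgHom (hasSubst_C_mul_X_add_C hc u), map_one]

lemma substLin_mul {c : A} (hc : IsNilpotent c) (u : A) (b₁ b₂ : A⟦X⟧) :
    substLin u c (b₁ * b₂) = substLin u c b₁ * substLin u c b₂ := by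
  simp only [substLin_eq_subst hc, subst_mul (hasSubst_C_mul_X_add_C hc u)]

lemma subst_C_mul_X_add_C {c₂ : A} (hc₂ : IsNilpotent c₂) (u₁ c₁ u₂ : A) :
    subst (C u₂ * X + C c₂ : A⟦X⟧) (C u₁ * X + C c₁ : A⟦X⟧) =
      C (u₁ * u₂) * X + C (u₁ * c₂ + c₁) := by
  have ha₂ := hasSubst_C_mul_X_add_C hc₂ u₂
  rw [subst_add ha₂, subst_mul ha₂, subst_X ha₂, subst_C, subst_C]
  change C u₁ * (C u₂ * X + C c₂) + C c₁ = _
  simp only [map_mul, map_add]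
  ring

lemma substLin_substLin {c₁ c₂ : A} (hc₁ : IsNilpotent c₁) (hc₂ : IsNilpotent c₂)
    (u₁ u₂ : A) (b : A⟦X⟧) :
    substLin u₂ c₂ (substLin u₁ c₁ b) = substLin (u₁ * u₂) (u₁ * c₂ + c₁) b := by
  have hc : IsNilpotent (u₁ * c₂ + c₁) :=
    (Commute.all _ _).isNilpotent_add ((Commute.all _ _).isNilpotent_mul_left hc₂) hc₁
  rw [substLin_eq_subst hc₁, substLin_eq_subst hc₂, substLin_eq_subst hc,
    subst_comp_subst_apply (hasSubst_C_mul_X_add_C hc₁ u₁) (hasSubst_C_mul_X_add_C hc₂ u₂),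
    subst_C_mul_X_add_C hc₂]

lemma map_substLin {B : Type*} [CommRing B] (f : A →+* B) {c : A} (hc : IsNilpotent c)
    (u : A) (b : A⟦X⟧) : map f (substLin u c b) = substLin (f u) (f c) (map f b) := by
  rw [substLin_eq_subst hc, substLin_eq_subst (hc.map f)]
  refine (map_subst (hasSubst_C_mul_X_add_C hc u) b).trans ?_
  change subst (map f (C u * X + C c)) (map f b) = _
  simp

end SubstLin

section GII

variable {A : Type*} [CommRing A]

local notation "π" => Ideal.Quotient.mk (nilradical A)

lemma mk_nilradical_eq_one_iff {a : A} : π a = 1 ↔ IsNilpotent (a - 1) := by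
  rw [← map_one π, Ideal.Quotient.eq, mem_nilradical]

lemma map_mk_nilradical_eq_one_iff {b : A⟦X⟧} :
    map π b = 1 ↔ ∀ n, IsNilpotent (coeff n (b - 1)) := by
  rw [← sub_eq_zero, ← map_one (map π), ← map_sub, PowerSeries.ext_iff]
  refine forall_congr' fun n => ?_
  rw [coeff_map, map_zero, Ideal.Quotient.eq_zero_iff_mem, mem_nilradical]

lemma mem_GII_iff {x : A × A⟦X⟧} : x ∈ GII A ↔ π x.1 = 1 ∧ map π x.2 = 1 := by
  rw [mk_nilradical_eq_one_iff, map_mk_nilradical_eq_one_iff]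
  rfl

lemma isUnit_of_mk_nilradical_eq_one {a : A} (h : π a = 1) : IsUnit a := by
  simpa using (mk_nilradical_eq_one_iff.mp h).isUnit_add_one

lemma isUnit_of_map_mk_nilradical_eq_one {b : A⟦X⟧} (h : map π b = 1) : IsUnit b := by
  rw [isUnit_iff_constantCoeff]
  apply isUnit_of_mk_nilradical_eq_one
  have h₀ := congrArg (coeff 0) h
  rwa [coeff_map, coeff_zero_one, coeff_zero_eq_constantCoeff_apply] at h₀

lemma isUnit_of_mem_GII {x : A × A⟦X⟧} (hx : x ∈ GII A) : IsUnit x.1 ∧ IsUnit x.2 := by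
  rw [mem_GII_iff] at hx
  exact ⟨isUnit_of_mk_nilradical_eq_one hx.1, isUnit_of_map_mk_nilradical_eq_one hx.2⟩

lemma isNilpotent_sub_one_mul {e : A} (he : π e = 1) (t : A) : IsNilpotent ((e - 1) * t) :=
  (Commute.all _ _).isNilpotent_mul_right (mk_nilradical_eq_one_iff.mp he)

lemma map_mk_nilradical_substLin {e : A} (he : π e = 1) (t : A) (b : A⟦X⟧) :
    map π (substLin e ((e - 1) * t) b) = map π b := by
  rw [map_substLin π (isNilpotent_sub_one_mul he t)]
  simp only [map_mul, map_sub, map_one, he, sub_self, zero_mul, substLin_one_zero]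

lemma substLin_substLin_sub_one_mul {y z : A} (hy : π y = 1) (hz : π z = 1) (t : A)
    (b : A⟦X⟧) :
    substLin z ((z - 1) * t) (substLin y ((y - 1) * t) b) =
      substLin (y * z) ((y * z - 1) * t) b := by
  rw [substLin_substLin (isNilpotent_sub_one_mul hy t) (isNilpotent_sub_one_mul hz t)]
  congr 1
  ring

variable (t : A)

lemma mulII_mem {x y : A × A⟦X⟧} (hx : x ∈ GII A) (hy : y ∈ GII A) : mulII t x y ∈ GII A := by
  rw [mem_GII_iff] at hx hy ⊢
  simp [mulII, map_mk_nilradical_substLin hy.1, hx, hy]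

lemma mulII_assoc {x y z : A × A⟦X⟧} (hy : y ∈ GII A) (hz : z ∈ GII A) :
    mulII t (mulII t x y) z = mulII t x (mulII t y z) := by
  rw [mem_GII_iff] at hy hz
  refine Prod.ext (mul_assoc _ _ _) ?_
  simp only [mulII]
  rw [substLin_mul (isNilpotent_sub_one_mul hz.1 t), substLin_substLin_sub_one_mul hy.1 hz.1,
    mul_assoc]

lemma one_mem_GII : ((1 : A), (1 : A⟦X⟧)) ∈ GII A := by
  simp [mem_GII_iff]

lemma mulII_one (x : A × A⟦X⟧) : mulII t x (1, 1) = x := by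
  simp [mulII, substLin_one_zero]

lemma one_mulII {x : A × A⟦X⟧} (hx : x ∈ GII A) : mulII t (1, 1) x = x := by
  rw [mem_GII_iff] at hx
  simp [mulII, substLin_one (isNilpotent_sub_one_mul hx.1 t)]

lemma mem_GII_ringInverse_substLin {x : A × A⟦X⟧} (hx : x ∈ GII A) :
    (Ring.inverse x.1, substLin (Ring.inverse x.1) ((Ring.inverse x.1 - 1) * t) x.2) ∈ GII A := by
  have he := map_ringInverse_eq_one π (isUnit_of_mem_GII hx).1 (mem_GII_iff.mp hx).1
  rw [mem_GII_iff] at hx ⊢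
  exact ⟨he, (map_mk_nilradical_substLin he t x.2).trans hx.2⟩

lemma invII_mem {x : A × A⟦X⟧} (hx : x ∈ GII A) : invII t x ∈ GII A := by
  have hg := mem_GII_ringInverse_substLin t hx
  have hu := isUnit_of_mem_GII hg
  rw [mem_GII_iff] at hg ⊢
  exact ⟨hg.1, map_ringInverse_eq_one (map π) hu.2 hg.2⟩

lemma mulII_invII {x : A × A⟦X⟧} (hx : x ∈ GII A) : mulII t x (invII t x) = (1, 1) :=
  Prod.ext (Ring.mul_inverse_cancel _ (isUnit_of_mem_GII hx).1)
    (Ring.mul_inverse_cancel _ (isUnit_of_mem_GII (mem_GII_ringInverse_substLin t hx)).2)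

lemma invII_mulII {x : A × A⟦X⟧} (hx : x ∈ GII A) : mulII t (invII t x) x = (1, 1) := by
  have hg := mem_GII_ringInverse_substLin t hx
  have hu := isUnit_of_mem_GII hx
  refine Prod.ext (Ring.inverse_mul_cancel _ hu.1) ?_
  set g := substLin (Ring.inverse x.1) ((Ring.inverse x.1 - 1) * t) x.2
  have he := (mem_GII_iff.mp hx).1
  have hc := isNilpotent_sub_one_mul he t
  have hxg : substLin x.1 ((x.1 - 1) * t) g = x.2 := by
    rw [substLin_substLin_sub_one_mul (mem_GII_iff.mp hg).1 he, Ring.inverse_mul_cancel _ hu.1,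
      sub_self, zero_mul, substLin_one_zero]
  change substLin x.1 ((x.1 - 1) * t) (Ring.inverse g) * x.2 = 1
  rw [← hxg, ← substLin_mul hc, Ring.inverse_mul_cancel _ (isUnit_of_mem_GII hg).2,
    substLin_one hc]

end GII

/-- `Ĝ_II(A)` is a group under `⋆`: it is closed under the product, the
product is associative, `(1,1)` is a two-sided unit, and
`(e⁻¹, b(e⁻¹W + (e⁻¹-1)t)⁻¹)` is a two-sided inverse. -/
theorem GII_is_group (A : Type*) [CommRing A] (t : A) :
    (∀ x ∈ GII A, ∀ y ∈ GII A, mulII t x y ∈ GII A) ∧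
    (∀ x ∈ GII A, ∀ y ∈ GII A, ∀ z ∈ GII A,
      mulII t (mulII t x y) z = mulII t x (mulII t y z)) ∧
    (((1 : A), (1 : PowerSeries A)) ∈ GII A ∧
      ∀ x ∈ GII A, mulII t x (1, 1) = x ∧ mulII t (1, 1) x = x) ∧
    (∀ x ∈ GII A, invII t x ∈ GII A ∧
      mulII t x (invII t x) = (1, 1) ∧ mulII t (invII t x) x = (1, 1)) :=
  ⟨fun _ hx _ hy => mulII_mem t hx hy,
    fun _ _ _ hy _ hz => mulII_assoc t hy hz,
    ⟨one_mem_GII, fun x hx => ⟨mulII_one t x, one_mulII t hx⟩⟩,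
    fun _ hx => ⟨invII_mem t hx, mulII_invII t hx, invII_mulII t hx⟩⟩
end

section
/- Let A be an associative unital algebra over ℂ, q ∈ ℂ not a root of unity, t central in A, and e, f ∈ A with ef = q⁻¹fe, e invertible. Let b(W) ∈ A[[W]] and α ∈ ℂ. Set 𝒜 = (e(t+W)+f)Q + X and 𝒵 = Σ_{n≥0} X^n C_q(α,n) (e(t+W)+f)^{−n} Q^{α−n} b(W) in the algebra of formal series in X, W over A adjoined symbols Q^β (β ∈ α+ℤ ∪ ℤ) satisfying Q^β Q^γ = Q^{β+γ}, Q^β X = q^β X Q^β, Q^β central over A[[W]]. Assume e(t+W)+f is invertible. Then 𝒜𝒵 = 𝒵𝒜 if and only if [e(t+W)+f, b(W)] = 0. -/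
/-!
Once `u` commutes with `b`, the `X^(j+1)`-coefficients of `𝒜𝒵` and `𝒵𝒜` are both scalar multiples
of `u⁻ʲ b`, and the two scalars agree by the q-Pascal identity
`q^l C_q(α,l) + C_q(α,l-1) = C_q(α,l) + q^(α-l+1) C_q(α,l-1)`. Conversely, the `X⁰`-coefficients
of `𝒜𝒵` and `𝒵𝒜` at shift index `0` are `ub` and `bu`.
-/

open Complex

/-- The q-number `[β]_q = (q^β - 1)/(q - 1)` for a complex exponent. -/
noncomputable def qNum (q β : ℂ) : ℂ := (q ^ β - 1) / (q - 1)

/-- The generalized q-binomial coefficient `C_q(α,n)`. -/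
noncomputable def qBinomC (q α : ℂ) (n : ℕ) : ℂ :=
  (∏ i ∈ Finset.range n, qNum q (α - i)) / (∏ i ∈ Finset.range n, qNum q (i + 1))

/-- The ambient algebra `F(ℕ, A[[W]])[[X]]`: an element is given by its
sequence of `X`-coefficients, each a function `ℕ → A[[W]]`.  The
multiplication is twisted by the shift operator `Σ` on `F(ℕ, A[[W]])`
(rule `aX = XΣ(a)`), so that the symbols `Q^β : n ↦ q^(nβ)` satisfy
`Q^β Q^γ = Q^(β+γ)` and `Q^β X = q^β X Q^β`, and `Q^β` is central over
`A[[W]]`. -/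
noncomputable def mulT {A : Type*} [Ring A]
    (F G : ℕ → ℕ → PowerSeries A) : ℕ → ℕ → PowerSeries A :=
  fun i n => ∑ p ∈ Finset.HasAntidiagonal.antidiagonal i, F p.1 (n + p.2) * G p.2 n

section QBinomial

variable {q : ℂ}

lemma cpow_sub_one_eq_mul_qNum (hq : q ≠ 1) (β : ℂ) : q ^ β - 1 = (q - 1) * qNum q β :=
  (mul_div_cancel₀ _ (sub_ne_zero.2 hq)).symm

lemma qNum_natCast_add_one_ne_zero (hq : ∀ n : ℕ, 1 ≤ n → q ^ n ≠ 1) (j : ℕ) :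
    qNum q (j + 1) ≠ 0 := by
  have hj : q ^ ((j : ℂ) + 1) ≠ 1 := by exact_mod_cast hq (j + 1) (by omega)
  exact div_ne_zero (sub_ne_zero.2 hj) (sub_ne_zero.2 (by simpa using hq 1 le_rfl))

@[simp]
lemma qBinomC_zero (α : ℂ) : qBinomC q α 0 = 1 := by
  simp [qBinomC]

lemma qBinomC_succ (α : ℂ) (j : ℕ) :
    qBinomC q α (j + 1) = qBinomC q α j * (qNum q (α - j) / qNum q (j + 1)) := by
  rw [qBinomC, qBinomC, Finset.prod_range_succ, Finset.prod_range_succ, mul_div_mul_comm]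

lemma qBinomC_succ_recurrence (hq : ∀ n : ℕ, 1 ≤ n → q ^ n ≠ 1) (α : ℂ) (j : ℕ) :
    q ^ (j + 1) * qBinomC q α (j + 1) + qBinomC q α j
      = qBinomC q α (j + 1) + q ^ (α - j) * qBinomC q α j := by
  have hq1 : q ≠ 1 := by simpa using hq 1 le_rfl
  have hN := qNum_natCast_add_one_ne_zero hq j
  have key : (q ^ (j + 1) - 1) * qBinomC q α (j + 1) = (q ^ (α - j) - 1) * qBinomC q α j := by
    rw [show (q ^ (j + 1) : ℂ) = q ^ ((j : ℂ) + 1) by norm_cast,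
      cpow_sub_one_eq_mul_qNum hq1, cpow_sub_one_eq_mul_qNum hq1, qBinomC_succ]
    field_simp
  linear_combination key

/-- The q-Pascal identity carrying the factors `q^(nβ)` contributed by the `Q^β` of `𝒵`
at shift index `n`. -/
lemma qBinomC_shifted_recurrence (hq0 : q ≠ 0) (hq : ∀ n : ℕ, 1 ≤ n → q ^ n ≠ 1)
    (α : ℂ) (j n : ℕ) :
    q ^ ((n + (j + 1) : ℕ) : ℂ) * (qBinomC q α (j + 1) * q ^ ((n : ℂ) * (α - (j + 1 : ℕ))))
        + qBinomC q α j * q ^ ((n : ℂ) * (α - j))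
      = qBinomC q α (j + 1) * q ^ ((n : ℂ) * (α - (j + 1 : ℕ))) * q ^ (n : ℂ)
        + qBinomC q α j * q ^ (((n + 1 : ℕ) : ℂ) * (α - j)) := by
  have hshift : q ^ (α - j) = q ^ (α - (j + 1 : ℕ)) * q := by
    rw [show α - j = α - (j + 1 : ℕ) + 1 by push_cast; ring,
      cpow_add _ _ hq0, cpow_one]
  have key := qBinomC_succ_recurrence hq α j
  rw [hshift] at key
  simp only [cpow_nat_mul, cpow_natCast, hshift]
  linear_combination (q ^ (α - (j + 1 : ℕ)) * q) ^ n * key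

end QBinomial

section Coefficients

variable {R : Type*} [Ring R]

/-- The `X`-coefficients of `a + X`, where `a` is a function of the shift index. -/
def xLinear (a : ℕ → R) (i n : ℕ) : R :=
  if i = 0 then a n else if i = 1 then 1 else 0

variable [Algebra ℂ R] {q α : ℂ} {u : Rˣ} {b : R}

/-- The `X`-coefficients of `𝒵`; `Q^β` evaluated at the shift index `n` is `q^(nβ)`. -/
noncomputable def zCoeff (q α : ℂ) (u : Rˣ) (b : R) (i n : ℕ) : R :=
  algebraMap ℂ R (qBinomC q α i * q ^ ((n : ℂ) * (α - i))) * ((u⁻¹ ^ i : Rˣ) : R) * b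

lemma zCoeff_eq_smul (i n : ℕ) :
    zCoeff q α u b i n
      = (qBinomC q α i * q ^ ((n : ℂ) * (α - i))) • (((u⁻¹ ^ i : Rˣ) : R) * b) := by
  rw [zCoeff, mul_assoc, Algebra.smul_def]

lemma zCoeff_zero_commute (hub : Commute (u : R) b) (n : ℕ) :
    (u : R) * algebraMap ℂ R (q ^ (n : ℂ)) * zCoeff q α u b 0 n
      = zCoeff q α u b 0 n * ((u : R) * algebraMap ℂ R (q ^ (n : ℂ))) := by
  simp only [zCoeff_eq_smul, Algebra.algebraMap_eq_smul_one, pow_zero, Units.val_one, one_mul,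
    mul_one, smul_mul_assoc, mul_smul_comm, smul_smul, hub.eq]
  rw [mul_comm (q ^ (n : ℂ))]

lemma zCoeff_succ_commute (hq0 : q ≠ 0) (hq : ∀ n : ℕ, 1 ≤ n → q ^ n ≠ 1)
    (hub : Commute (u : R) b) (j n : ℕ) :
    (u : R) * algebraMap ℂ R (q ^ ((n + (j + 1) : ℕ) : ℂ)) * zCoeff q α u b (j + 1) n
        + zCoeff q α u b j n
      = zCoeff q α u b (j + 1) n * ((u : R) * algebraMap ℂ R (q ^ (n : ℂ)))
        + zCoeff q α u b j (n + 1) := by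
  have hleft : (u : R) * (((u⁻¹ ^ (j + 1) : Rˣ) : R) * b) = ((u⁻¹ ^ j : Rˣ) : R) * b := by
    rw [pow_succ', Units.val_mul, ← mul_assoc, ← mul_assoc, Units.mul_inv, one_mul]
  have hright : ((u⁻¹ ^ (j + 1) : Rˣ) : R) * (b * u) = ((u⁻¹ ^ j : Rˣ) : R) * b := by
    rw [← hub.eq, pow_succ, Units.val_mul, mul_assoc, ← mul_assoc ((u⁻¹ : Rˣ) : R), Units.inv_mul,
      one_mul]
  simp only [zCoeff_eq_smul, Algebra.algebraMap_eq_smul_one, smul_mul_assoc, mul_smul_comm,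
    mul_one, smul_smul, mul_assoc, hleft, hright, ← add_smul]
  congr 1
  linear_combination qBinomC_shifted_recurrence hq0 hq α j n

end Coefficients

section SkewProduct

variable {A : Type*} [Ring A] (a : ℕ → PowerSeries A) (G : ℕ → ℕ → PowerSeries A) (n : ℕ)

lemma mulT_xLinear_zero : mulT (xLinear a) G 0 n = a n * G 0 n := by
  simp [mulT, xLinear]

lemma mulT_xLinear_succ (j : ℕ) :
    mulT (xLinear a) G (j + 1) n = a (n + (j + 1)) * G (j + 1) n + G j n := by
  rw [mulT, Finset.Nat.sum_antidiagonal_succ, Finset.sum_eq_single (0, j)]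
  · simp [xLinear]
  · rintro ⟨k, l⟩ hkl hk
    have hk0 : k ≠ 0 := by rintro rfl; simp_all
    simp [xLinear, hk0]
  · simp

lemma mulT_zero_xLinear : mulT G (xLinear a) 0 n = G 0 n * a n := by
  simp [mulT, xLinear]

lemma mulT_succ_xLinear (j : ℕ) :
    mulT G (xLinear a) (j + 1) n = G (j + 1) n * a n + G j (n + 1) := by
  rw [mulT, Finset.Nat.sum_antidiagonal_succ', Finset.sum_eq_single (j, 0)]
  · simp [xLinear]
  · rintro ⟨k, l⟩ hkl hl
    have hl0 : l ≠ 0 := by rintro rfl; simp_all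
    simp [xLinear, hl0]
  · simp

end SkewProduct

theorem AZ_comm_iff_comm_general (A : Type*) [Ring A] [Algebra ℂ A]
    (q : ℂ) (hq0 : q ≠ 0) (hq : ∀ n : ℕ, 1 ≤ n → q ^ n ≠ 1) (α : ℂ)
    (b : PowerSeries A) (u : (PowerSeries A)ˣ) :
    (mulT
        (fun i n => if i = 0 then
            (u : PowerSeries A) * algebraMap ℂ (PowerSeries A) (q ^ (n : ℂ))
          else if i = 1 then 1 else 0)
        (fun i n => algebraMap ℂ (PowerSeries A)
            (qBinomC q α i * q ^ ((n : ℂ) * (α - i)))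
          * ((u⁻¹ ^ i : (PowerSeries A)ˣ) : PowerSeries A) * b)
      = mulT
        (fun i n => algebraMap ℂ (PowerSeries A)
            (qBinomC q α i * q ^ ((n : ℂ) * (α - i)))
          * ((u⁻¹ ^ i : (PowerSeries A)ˣ) : PowerSeries A) * b)
        (fun i n => if i = 0 then
            (u : PowerSeries A) * algebraMap ℂ (PowerSeries A) (q ^ (n : ℂ))
          else if i = 1 then 1 else 0)) ↔
    Commute (u : PowerSeries A) b := by
  change mulT (xLinear fun n => (u : PowerSeries A) * algebraMap ℂ _ (q ^ (n : ℂ)))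
      (zCoeff q α u b) = mulT (zCoeff q α u b)
      (xLinear fun n => (u : PowerSeries A) * algebraMap ℂ _ (q ^ (n : ℂ))) ↔ _
  constructor
  · intro h
    simpa [mulT_xLinear_zero, mulT_zero_xLinear, zCoeff, commute_iff_eq]
      using congrFun (congrFun h 0) 0
  · intro hub
    funext i n
    cases i with
    | zero => rw [mulT_xLinear_zero, mulT_zero_xLinear, zCoeff_zero_commute hub]
    | succ j => rw [mulT_xLinear_succ, mulT_succ_xLinear, zCoeff_succ_commute hq0 hq hub]

/-- `𝒜𝒵 = 𝒵𝒜` iff `[e(t+W)+f, b(W)] = 0`, where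
`𝒜 = (e(t+W)+f)Q + X` and
`𝒵 = Σ_n Xⁿ C_q(α,n) (e(t+W)+f)⁻ⁿ Q^(α-n) b(W)`. -/
theorem AZ_comm_iff_comm (A : Type*) [Ring A] [Algebra ℂ A]
    (q : ℂ) (hq0 : q ≠ 0) (hq : ∀ n : ℕ, 1 ≤ n → q ^ n ≠ 1) (α : ℂ)
    (t e f : A) (ht : ∀ a : A, t * a = a * t)
    (hef : e * f = q⁻¹ • (f * e)) (he : IsUnit e)
    (b : PowerSeries A) (u : (PowerSeries A)ˣ)
    (hu : (u : PowerSeries A)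
      = PowerSeries.C e * (PowerSeries.C t + PowerSeries.X)
        + PowerSeries.C f) :
    (mulT
        (fun i n => if i = 0 then
            (u : PowerSeries A) * algebraMap ℂ (PowerSeries A) (q ^ (n : ℂ))
          else if i = 1 then 1 else 0)
        (fun i n => algebraMap ℂ (PowerSeries A)
            (qBinomC q α i * q ^ ((n : ℂ) * (α - i)))
          * ((u⁻¹ ^ i : (PowerSeries A)ˣ) : PowerSeries A) * b)
      = mulT
        (fun i n => algebraMap ℂ (PowerSeries A)
            (qBinomC q α i * q ^ ((n : ℂ) * (α - i)))
          * ((u⁻¹ ^ i : (PowerSeries A)ˣ) : PowerSeries A) * b)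
        (fun i n => if i = 0 then
            (u : PowerSeries A) * algebraMap ℂ (PowerSeries A) (q ^ (n : ℂ))
          else if i = 1 then 1 else 0)) ↔
    Commute (u : PowerSeries A) b :=
  AZ_comm_iff_comm_general A q hq0 hq α b u
end
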